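/- Let w : ℝ^{n+1} × (0,∞) → ℝ be smooth and caloric on an open set U ⊆ ℝ^{n+1} × (0,∞) with |∇w(x,t)| ≤ 1 on U, let ε > 0, and let c ≥ 4 be a constant. Then the function tanh(w(x,t)/√t − c) is a sub-solution of the ε-Allen–Cahn equation on {(x,t) ∈ U : w(x,t) > c√t}, i.e. ∂ₜg − Δg + ε⁻² f(g) ≤ 0 there, and the function tanh(w(x,t)/√t + c) is a super-solution on {(x,t) ∈ U : w(x,t) < −c√t}, i.e. ∂ₜg − Δg + ε⁻² f(g) ≥ 0 there, where f(u) = 2u(u²−1). -/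

import Mathlib

open MeasureTheory Set

noncomputable section

/-- `ℝ^{n+1}` as a Euclidean space. -/
abbrev Euc (n : ℕ) := EuclideanSpace ℝ (Fin (n + 1))

/-- The spatial Laplacian: sum of second derivatives in coordinate directions. -/
def lap (n : ℕ) (f : Euc n → ℝ) (x : Euc n) : ℝ :=
  ∑ i : Fin (n + 1),
    fderiv ℝ (fun y => fderiv ℝ f y (EuclideanSpace.single i 1)) x (EuclideanSpace.single i 1)

/-- The Allen–Cahn nonlinearity `f(u) = 2u(u²-1)`, the derivative of `F(u) = ½(1-u²)²`. -/
def acF (u : ℝ) : ℝ := 2 * u * (u ^ 2 - 1)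

open Real

/-! With `φ = w / √t + a`, the chain rule gives
`(∂ₜ - Δ) tanh φ = (1 - tanh² φ) ((∂ₜ - Δ) φ + 2 tanh φ · |∇φ|²)`, and since `w` is caloric,
`(∂ₜ - Δ) φ = -w / (2 t^{3/2})` while `|∇φ|² = |∇w|² / t ≤ 1 / t`. Where `w > c√t` and `a = -c`,
`0 ≤ tanh φ < 1`, so the bracket is at most `(2 - c/2) / t ≤ 0` and `f(tanh φ) ≤ 0`;
the super-solution case is the same computation with the signs of `w` and `tanh φ` flipped. -/

theorem Real.hasDerivAt_tanh (x : ℝ) : HasDerivAt tanh (1 - tanh x ^ 2) x := by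
  have h := (hasDerivAt_sinh x).div (hasDerivAt_cosh x) (cosh_pos x).ne'
  rw [show tanh = fun y => sinh y / cosh y from funext tanh_eq_sinh_div_cosh]
  refine h.congr_deriv ?_
  have hpyth := cosh_sq_sub_sinh_sq x
  have hcosh := (cosh_pos x).ne'
  field_simp

theorem Real.tanh_nonneg {x : ℝ} (hx : 0 ≤ x) : 0 ≤ tanh x := by
  rw [tanh_eq_sinh_div_cosh]
  exact div_nonneg (sinh_nonneg_iff.mpr hx) (cosh_pos x).le

theorem Real.tanh_nonpos {x : ℝ} (hx : x ≤ 0) : tanh x ≤ 0 := by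
  simpa [tanh_neg] using tanh_nonneg (neg_nonneg.mpr hx)

theorem hasDerivAt_one_sub_tanh_sq (x : ℝ) :
    HasDerivAt (fun y => 1 - tanh y ^ 2) (-2 * tanh x * (1 - tanh x ^ 2)) x :=
  (((hasDerivAt_tanh x).pow 2).const_sub 1).congr_deriv (by ring)

theorem sum_fderiv_single_sq {ι : Type*} [Fintype ι] [DecidableEq ι]
    (f : EuclideanSpace ℝ ι → ℝ) (x : EuclideanSpace ℝ ι) :
    ∑ i, fderiv ℝ f x (EuclideanSpace.single i 1) ^ 2 = ‖gradient f x‖ ^ 2 := by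
  have hcoord (i : ι) : fderiv ℝ f x (EuclideanSpace.single i 1) = gradient f x i := by
    rw [gradient, ← InnerProductSpace.toDual_symm_apply, EuclideanSpace.inner_single_right]
    simp
  rw [EuclideanSpace.norm_eq, sq_sqrt (by positivity)]
  simp [hcoord]

theorem fderiv_div_const_add_const {E : Type*} [NormedAddCommGroup E] [NormedSpace ℝ E]
    (f : E → ℝ) (s a : ℝ) :
    fderiv ℝ (fun y => f y / s + a) = s⁻¹ • fderiv ℝ f := by
  funext x
  rw [fderiv_add_const, show (fun y => f y / s) = s⁻¹ • f by ext; simp [div_eq_inv_mul],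
    fderiv_const_smul_field]

theorem gradient_div_const_add_const {ι : Type*} [Fintype ι]
    (f : EuclideanSpace ℝ ι → ℝ) (s a : ℝ) (x : EuclideanSpace ℝ ι) :
    gradient (fun y => f y / s + a) x = s⁻¹ • gradient f x := by
  simp only [gradient, fderiv_div_const_add_const, Pi.smul_apply, map_smul]

theorem lap_div_const_add_const {n : ℕ} (f : Euc n → ℝ) (s a : ℝ) (x : Euc n) :
    lap n (fun y => f y / s + a) x = lap n f x / s := by
  have hscale (h : Euc n → ℝ) : fderiv ℝ (fun y => h y / s) = s⁻¹ • fderiv ℝ h := by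
    simpa using fderiv_div_const_add_const h s 0
  simp only [lap, fderiv_div_const_add_const, Pi.smul_apply, smul_apply, smul_eq_mul,
    inv_mul_eq_div, hscale, Finset.sum_div]

theorem lap_comp {n : ℕ} {g g' : ℝ → ℝ} {g'' : ℝ} {φ : Euc n → ℝ} {x : Euc n}
    (hg : ∀ u, HasDerivAt g (g' u) u) (hg' : HasDerivAt g' g'' (φ x))
    (hφ : ContDiffAt ℝ 2 φ x) :
    lap n (fun y => g (φ y)) x = g' (φ x) * lap n φ x + g'' * ‖gradient φ x‖ ^ 2 := by
  have hfderiv : ∀ᶠ y in nhds x, fderiv ℝ (fun y => g (φ y)) y = g' (φ y) • fderiv ℝ φ y := by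
    filter_upwards [hφ.eventually (by simp)] with y hy
    exact ((hg _).comp_hasFDerivAt y (hy.differentiableAt (by simp)).hasFDerivAt).fderiv
  have hterm (v : Euc n) :
      fderiv ℝ (fun y => fderiv ℝ (fun y => g (φ y)) y v) x v
        = g' (φ x) * fderiv ℝ (fun y => fderiv ℝ φ y v) x v + g'' * fderiv ℝ φ x v ^ 2 := by
    have hdir : DifferentiableAt ℝ (fun y => fderiv ℝ φ y v) x :=
      ((hφ.fderiv_right (m := 1) (by norm_num)).differentiableAt (by simp)).clm_apply
        (differentiableAt_const v)
    have hcoef : HasFDerivAt (fun y => g' (φ y)) (g'' • fderiv ℝ φ x) x :=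
      hg'.comp_hasFDerivAt x (hφ.differentiableAt (by simp)).hasFDerivAt
    have hdir_eq : (fun y => fderiv ℝ (fun y => g (φ y)) y v)
        =ᶠ[nhds x] fun y => g' (φ y) * fderiv ℝ φ y v := by
      filter_upwards [hfderiv] with y hy
      simp [hy]
    rw [hdir_eq.fderiv_eq, (hcoef.fun_mul hdir.hasFDerivAt).fderiv]
    simp only [add_apply, smul_apply, smul_eq_mul]
    ring
  simp only [lap, hterm, Finset.sum_add_distrib, ← Finset.mul_sum, sum_fderiv_single_sq]

theorem hasDerivAt_div_sqrt {ψ : ℝ → ℝ} {ψ' t : ℝ} (hψ : HasDerivAt ψ ψ' t) (ht : 0 < t) :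
    HasDerivAt (fun s => ψ s / √s) (ψ' / √t - ψ t / (2 * t * √t)) t := by
  have hs : 0 < √t := sqrt_pos.mpr ht
  refine (hψ.div (hasDerivAt_sqrt ht.ne') hs.ne').congr_deriv ?_
  have hsq := sq_sqrt ht.le
  field_simp
  rw [hsq]
  ring

theorem heat_tanh_eq {n : ℕ} {u : Euc n × ℝ → ℝ} {x : Euc n} {t : ℝ} (ht : 0 < t)
    (hspace : ContDiffAt ℝ 2 (fun y => u (y, t)) x)
    (htime : HasDerivAt (fun s => u (x, s)) (lap n (fun y => u (y, t)) x) t) (a : ℝ) :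
    deriv (fun s => tanh (u (x, s) / √s + a)) t - lap n (fun y => tanh (u (y, t) / √t + a)) x
      = (1 - tanh (u (x, t) / √t + a) ^ 2) * (2 * tanh (u (x, t) / √t + a)
          * ‖gradient (fun y => u (y, t)) x‖ ^ 2 - u (x, t) / √t / 2) / t := by
  have hs : 0 < √t := sqrt_pos.mpr ht
  have hderiv := ((hasDerivAt_tanh _).comp t ((hasDerivAt_div_sqrt htime ht).add_const a)).deriv
  have hlap := lap_comp (g := tanh) hasDerivAt_tanh (hasDerivAt_one_sub_tanh_sq _)
    ((hspace.div_const (√t)).add (contDiffAt_const (c := a)))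
  simp only [Function.comp_def] at hderiv
  rw [hderiv, hlap, lap_div_const_add_const, gradient_div_const_add_const, norm_smul, norm_inv,
    Real.norm_of_nonneg hs.le]
  generalize tanh (u (x, t) / √t + a) = T
  generalize lap n (fun y => u (y, t)) x = L
  generalize ‖gradient (fun y => u (y, t)) x‖ = G
  generalize u (x, t) = z
  have ht' := sq_sqrt ht.le
  generalize √t = r at hs ht' ⊢
  subst ht'
  field_simp
  ring

theorem heat_tanh_eq_of_contDiffAt {n : ℕ} {w : Euc n × ℝ → ℝ} {p : Euc n × ℝ}
    (hw : ContDiffAt ℝ 2 w p)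
    (hcaloric : deriv (fun s => w (p.1, s)) p.2 = lap n (fun y => w (y, p.2)) p.1)
    (ht : 0 < p.2) (a : ℝ) :
    deriv (fun s => tanh (w (p.1, s) / √s + a)) p.2
        - lap n (fun y => tanh (w (y, p.2) / √p.2 + a)) p.1
      = (1 - tanh (w p / √p.2 + a) ^ 2) * (2 * tanh (w p / √p.2 + a)
        * ‖gradient (fun y => w (y, p.2)) p.1‖ ^ 2 - w p / √p.2 / 2) / p.2 := by
  have htime : HasDerivAt (fun s => w (p.1, s)) (lap n (fun y => w (y, p.2)) p.1) p.2 := by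
    rw [← hcaloric]
    exact ((hw.comp p.2 (contDiff_prodMk_right p.1).contDiffAt).differentiableAt
      (by simp)).hasDerivAt
  exact heat_tanh_eq ht (hw.comp p.1 (contDiff_prodMk_left p.2).contDiffAt) htime a

theorem acF_neg (u : ℝ) : acF (-u) = -acF u := by
  simp only [acF]
  ring

theorem heat_tanh_add_acF_nonpos {T G z t κ : ℝ} (hT₀ : 0 ≤ T) (hT₁ : T < 1) (hG₀ : 0 ≤ G)
    (hG₁ : G ≤ 1) (hz : 4 ≤ z) (ht : 0 < t) (hκ : 0 ≤ κ) :
    (1 - T ^ 2) * (2 * T * G ^ 2 - z / 2) / t + κ * acF T ≤ 0 := by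
  have hweight : 0 ≤ 1 - T ^ 2 := by nlinarith
  have hbracket : 2 * T * G ^ 2 - z / 2 ≤ 0 := by nlinarith [mul_le_one₀ hT₁.le hG₀ hG₁]
  have hacF : acF T ≤ 0 := by
    simp only [acF]
    nlinarith
  linarith [div_nonpos_of_nonpos_of_nonneg (mul_nonpos_of_nonneg_of_nonpos hweight hbracket) ht.le,
    mul_nonpos_of_nonneg_of_nonpos hκ hacF]

theorem heat_tanh_add_acF_nonneg {T G z t κ : ℝ} (hT₀ : T ≤ 0) (hT₁ : -1 < T) (hG₀ : 0 ≤ G)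
    (hG₁ : G ≤ 1) (hz : z ≤ -4) (ht : 0 < t) (hκ : 0 ≤ κ) :
    0 ≤ (1 - T ^ 2) * (2 * T * G ^ 2 - z / 2) / t + κ * acF T := by
  have h := heat_tanh_add_acF_nonpos (T := -T) (z := -z) (by linarith) (by linarith) hG₀ hG₁
    (by linarith) ht hκ
  rw [acF_neg] at h
  have hflip : (1 - (-T) ^ 2) * (2 * -T * G ^ 2 - -z / 2) / t
      = -((1 - T ^ 2) * (2 * T * G ^ 2 - z / 2) / t) := by ring
  linarith

theorem stmt6_general (n : ℕ) (w : Euc n × ℝ → ℝ) (U : Set (Euc n × ℝ))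
    (hUopen : IsOpen U) (hUt : ∀ p ∈ U, 0 < p.2)
    (hsmooth : ContDiffOn ℝ ((⊤ : ℕ∞) : WithTop ℕ∞) w U)
    (hcaloric : ∀ p ∈ U, deriv (fun s => w (p.1, s)) p.2 = lap n (fun y => w (y, p.2)) p.1)
    (hgrad : ∀ p ∈ U, ‖gradient (fun y => w (y, p.2)) p.1‖ ≤ 1)
    (ε : ℝ) (c : ℝ) (hc : 4 ≤ c) :
    (∀ p ∈ U, c * Real.sqrt p.2 < w p →
      deriv (fun s => Real.tanh (w (p.1, s) / Real.sqrt s - c)) p.2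
          - lap n (fun y => Real.tanh (w (y, p.2) / Real.sqrt p.2 - c)) p.1
          + (ε ^ 2)⁻¹ * acF (Real.tanh (w p / Real.sqrt p.2 - c)) ≤ 0) ∧
    (∀ p ∈ U, w p < -(c * Real.sqrt p.2) →
      0 ≤ deriv (fun s => Real.tanh (w (p.1, s) / Real.sqrt s + c)) p.2
          - lap n (fun y => Real.tanh (w (y, p.2) / Real.sqrt p.2 + c)) p.1
          + (ε ^ 2)⁻¹ * acF (Real.tanh (w p / Real.sqrt p.2 + c))) := by
  have hw (p : Euc n × ℝ) (hp : p ∈ U) : ContDiffAt ℝ 2 w p :=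
    (hsmooth.contDiffAt (hUopen.mem_nhds hp)).of_le (WithTop.coe_le_coe.mpr le_top)
  have hκ : 0 ≤ (ε ^ 2)⁻¹ := by positivity
  refine ⟨fun p hp hwp => ?_, fun p hp hwp => ?_⟩
  · have hz : c < w p / √p.2 := (lt_div_iff₀ (sqrt_pos.mpr (hUt p hp))).mpr hwp
    have h := heat_tanh_eq_of_contDiffAt (hw p hp) (hcaloric p hp) (hUt p hp) (-c)
    simp only [← sub_eq_add_neg] at h
    rw [h]
    exact heat_tanh_add_acF_nonpos (tanh_nonneg (by linarith)) (tanh_lt_one _) (norm_nonneg _)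
      (hgrad p hp) (by linarith) (hUt p hp) hκ
  · have hz : w p / √p.2 < -c := (div_lt_iff₀ (sqrt_pos.mpr (hUt p hp))).mpr (by linarith)
    rw [heat_tanh_eq_of_contDiffAt (hw p hp) (hcaloric p hp) (hUt p hp) c]
    exact heat_tanh_add_acF_nonneg (tanh_nonpos (by linarith)) (neg_one_lt_tanh _) (norm_nonneg _)
      (hgrad p hp) (by linarith) (hUt p hp) hκ

theorem stmt6 (n : ℕ) (w : Euc n × ℝ → ℝ) (U : Set (Euc n × ℝ))
    (hUopen : IsOpen U) (hUt : ∀ p ∈ U, 0 < p.2)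
    (hsmooth : ContDiffOn ℝ ((⊤ : ℕ∞) : WithTop ℕ∞) w U)
    (hcaloric : ∀ p ∈ U, deriv (fun s => w (p.1, s)) p.2 = lap n (fun y => w (y, p.2)) p.1)
    (hgrad : ∀ p ∈ U, ‖gradient (fun y => w (y, p.2)) p.1‖ ≤ 1)
    (ε : ℝ) (hε : 0 < ε) (c : ℝ) (hc : 4 ≤ c) :
    (∀ p ∈ U, c * Real.sqrt p.2 < w p →
      deriv (fun s => Real.tanh (w (p.1, s) / Real.sqrt s - c)) p.2
          - lap n (fun y => Real.tanh (w (y, p.2) / Real.sqrt p.2 - c)) p.1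
          + (ε ^ 2)⁻¹ * acF (Real.tanh (w p / Real.sqrt p.2 - c)) ≤ 0) ∧
    (∀ p ∈ U, w p < -(c * Real.sqrt p.2) →
      0 ≤ deriv (fun s => Real.tanh (w (p.1, s) / Real.sqrt s + c)) p.2
          - lap n (fun y => Real.tanh (w (y, p.2) / Real.sqrt p.2 + c)) p.1
          + (ε ^ 2)⁻¹ * acF (Real.tanh (w p / Real.sqrt p.2 + c))) :=
  stmt6_general n w U hUopen hUt hsmooth hcaloric hgrad ε c hc

end
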